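/- arXiv:2601.06654 — 7 statements merged into one kernel-verified Lean document; each statement's English description precedes it below -/
import Mathlib

section
/- Let p, q be coprime positive integers and write q = up + v with 0 ≤ v < p. Define s_i = u+1 for 0 ≤ i < v and s_i = u for v ≤ i < p, extended periodically modulo p. Suppose n = ℓp + i and p + q - 1 - n = ℓ'p + i' with i, i' ∈ {0,...,p-1}. Then i' ≡ q - i - 1 (mod p), s_i = s_{i'}, and (when s_i ≠ 0) ℓ' ≡ -ℓ (mod s_i). -/
/-- Lemma on the symmetry of the sequence `s`: if `n = ℓ p + i` and
`p + q - 1 - n = ℓ' p + i'` with `i, i' ∈ {0,…,p-1}`, then `i' ≡ q - i - 1 (mod p)`,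
`s i = s i'`, and (when `s i ≠ 0`) `ℓ' ≡ -ℓ (mod s i)`. -/
theorem stmt1 (p q : ℤ) (hp : 0 < p) (hq : 0 < q) (hpq : IsCoprime p q)
    (u v : ℤ) (hv0 : 0 ≤ v) (hv : v < p) (hqd : q = u * p + v)
    (s : ℤ → ℤ) (hs : ∀ i, s i = if i % p < v then u + 1 else u)
    (n i l i' l' : ℤ)
    (hi : i = n % p) (hn : n = l * p + i)
    (hi' : i' = (p + q - 1 - n) % p) (hn' : p + q - 1 - n = l' * p + i') :
    i' % p = (q - i - 1) % p ∧ s i = s i' ∧ (s i ≠ 0 → l' % s i = (-l) % s i) := by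
  have hpne : p ≠ 0 := hp.ne'
  have h0i : 0 ≤ i := hi ▸ Int.emod_nonneg n hpne
  have hip : i < p := hi ▸ Int.emod_lt_of_pos n hp
  have h0i' : 0 ≤ i' := hi' ▸ Int.emod_nonneg _ hpne
  have hip' : i' < p := hi' ▸ Int.emod_lt_of_pos _ hp
  have hii : i % p = i := Int.emod_eq_of_lt h0i hip
  have hii' : i' % p = i' := Int.emod_eq_of_lt h0i' hip'
  have hsum : (u + 1 - l - l') * p = i + i' - v + 1 := by
    linear_combination hn' + hn - hqd
  have hk : u + 1 - l - l' = 0 ∨ u + 1 - l - l' = 1 := by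
    rcases lt_trichotomy (u + 1 - l - l') 0 with h | h | h
    · exfalso
      have h1 : u + 1 - l - l' ≤ -1 := by omega
      nlinarith
    · left; exact h
    · rcases eq_or_lt_of_le (show (1:ℤ) ≤ u + 1 - l - l' by omega) with h1 | h1
      · right; omega
      · exfalso
        have h2 : 2 ≤ u + 1 - l - l' := by omega
        nlinarith
  rcases hk with h | h
  · -- l + l' = u + 1, i + i' = v - 1
    have hiv : i + i' = v - 1 := by
      rw [h, zero_mul] at hsum; linarith
    have hI : i < v := by omega
    have hI' : i' < v := by omega
    have hsi : s i = u + 1 := by rw [hs, hii, if_pos hI]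
    have hsi' : s i' = u + 1 := by rw [hs, hii', if_pos hI']
    refine ⟨?_, by rw [hsi, hsi'], ?_⟩
    · have hq1 : q - i - 1 = i' + p * u := by linear_combination hqd - hiv
      rw [hii', hq1, Int.add_mul_emod_self_left, hii']
    · intro hne
      have hl' : l' = -l + (u + 1) * 1 := by omega
      rw [hsi, hl', Int.add_mul_emod_self_left]
  · -- l + l' = u, i + i' = v - 1 + p
    have hiv : i + i' = v - 1 + p := by
      rw [h, one_mul] at hsum; linarith
    have hI : ¬ (i < v) := by omega
    have hI' : ¬ (i' < v) := by omega
    have hsi : s i = u := by rw [hs, hii, if_neg hI]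
    have hsi' : s i' = u := by rw [hs, hii', if_neg hI']
    refine ⟨?_, by rw [hsi, hsi'], ?_⟩
    · have hq1 : q - i - 1 = i' + p * (u - 1) := by linear_combination hqd - hiv
      rw [hii', hq1, Int.add_mul_emod_self_left, hii']
    · intro hne
      have hl' : l' = -l + u * 1 := by omega
      rw [hsi, hl', Int.add_mul_emod_self_left]
end

section
/- Let p, q be coprime positive integers with p + q odd, and let ℓ_0, i_0 be the integers with (p+q-1)/2 = ℓ_0 p + i_0 and 0 ≤ i_0 < p. Define s as: q = up + v with 0 ≤ v < p, s_i = u+1 for i < v, s_i = u for i ≥ v. Then s_{i_0} = 2ℓ_0 is even. In particular p > q if and only if s_{i_0} = 0. -/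
lemma div_unique_aux {p a b r t : ℕ} (hp : 0 < p) (hr : r < p) (ht : t < p)
    (h : a * p + r = b * p + t) : a = b ∧ r = t := by
  rcases lt_trichotomy a b with hab | hab | hab
  · obtain ⟨k, hk⟩ := Nat.exists_eq_add_of_lt hab
    subst hk
    have : (a + k + 1) * p = a * p + k * p + p := by ring
    omega
  · subst hab; omega
  · obtain ⟨k, hk⟩ := Nat.exists_eq_add_of_lt hab
    subst hk
    have : (b + k + 1) * p = b * p + k * p + p := by ring
    omega

/-- If `p + q` is odd and `(p+q-1)/2 = ℓ₀ p + i₀` with `0 ≤ i₀ < p`, then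
`s i₀ = 2 ℓ₀` is even; in particular `p > q ↔ s i₀ = 0`. -/
theorem stmt3 (p q l0 i0 u v : ℕ) (hp : 0 < p) (hq : 0 < q) (hpq : Nat.Coprime p q)
    (hodd : Odd (p + q)) (hi0 : i0 < p) (hdec : p + q - 1 = 2 * (l0 * p + i0))
    (hv : v < p) (hqd : q = u * p + v)
    (s : ℕ → ℕ) (hs : ∀ i, s i = if i < v then u + 1 else u) :
    s i0 = 2 * l0 ∧ Even (s i0) ∧ (p > q ↔ s i0 = 0) := by
  have key : s i0 = 2 * l0 := by
    rcases Nat.eq_zero_or_pos v with hv0 | hv1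
    · have hdvd : p ∣ q := ⟨u, by rw [hqd, hv0]; ring⟩
      have hp1 : p = 1 := Nat.dvd_one.mp (hpq ▸ Nat.dvd_gcd dvd_rfl hdvd)
      subst hp1
      have hi : i0 = 0 := by omega
      rw [hs, hi, if_neg (by omega)]
      omega
    · by_cases h2 : 2 * i0 < p
      · have heq : (u + 1) * p + (v - 1) = (2 * l0) * p + 2 * i0 := by
          have e1 : (u + 1) * p = u * p + p := by ring
          have e3 : (2 * l0) * p = 2 * (l0 * p) := by ring
          omega
        obtain ⟨h1, h2'⟩ := div_unique_aux hp (by omega) h2 heq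
        rw [hs, if_pos (by omega)]; omega
      · have heq : (u + 1) * p + (v - 1) = (2 * l0 + 1) * p + (2 * i0 - p) := by
          have e1 : (u + 1) * p = u * p + p := by ring
          have e2 : (2 * l0 + 1) * p = 2 * (l0 * p) + p := by ring
          omega
        obtain ⟨h1, h2'⟩ := div_unique_aux hp (by omega) (by omega) heq
        rw [hs, if_neg (by omega)]; omega
  refine ⟨key, ⟨l0, by omega⟩, ?_⟩
  rcases Nat.eq_zero_or_pos l0 with hl0 | hl0
  · subst hl0
    omega
  · have hl : p ≤ l0 * p := Nat.le_mul_of_pos_left p hl0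
    omega
end

section
/- Let p, q be coprime positive integers, let X = {0, 1, ..., min(p,q) - 1} viewed as a subset of ℤ/qℤ, and define s as: q = up + v with 0 ≤ v < p, s_j = u+1 for 0 ≤ j < v, s_j = u for v ≤ j < p (indices of s interpreted via j ∈ {0,...,min(p,q)-1} reduced mod p). Then the map Z: X → ℤ/qℤ given by Z(j) = s_j · p + j (mod q) maps X bijectively onto X, and moreover Z is a cyclic permutation of X, i.e., it has exactly one orbit on X. -/
/-- The map `Z(j) = (s_j · p + j) mod q` maps `X = {0,…,min(p,q)-1}` (viewed inside
`ℤ/qℤ` via residues) bijectively onto itself, and is a cyclic permutation of `X`,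
i.e. it has exactly one orbit. -/
theorem stmt4 (p q u v : ℕ) (hp : 0 < p) (hq : 0 < q) (hpq : Nat.Coprime p q)
    (hv : v < p) (hqd : q = u * p + v)
    (s : ℕ → ℕ) (hs : ∀ j, s j = if j % p < v then u + 1 else u)
    (Z : ℕ → ℕ) (hZ : ∀ j, Z j = (s j * p + j) % q) :
    Set.BijOn Z ↑(Finset.range (min p q)) ↑(Finset.range (min p q)) ∧
    (∀ j ∈ Finset.range (min p q), ∀ j' ∈ Finset.range (min p q), ∃ m : ℕ, Z^[m] j = j') := by
  set M := min p q with hM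
  have hM0 : 0 < M := lt_min hp hq
  obtain ⟨C, hC, hZC⟩ : ∃ C, Nat.Coprime C M ∧ ∀ j < M, Z j = (j + C) % M := by
    rcases le_or_gt p q with h | h
    · have hmp : M = p := min_eq_left h
      have hpv : Nat.Coprime p v := by
        have := hpq
        rw [hqd, show u * p + v = v + p * u by ring, Nat.coprime_add_mul_left_right] at this
        exact this
      refine ⟨p - v, ?_, ?_⟩
      · rw [hmp]
        have hd : Nat.gcd (p - v) p ∣ v := by
          have h1 := Nat.gcd_dvd_left (p - v) p
          have h2 := Nat.gcd_dvd_right (p - v) p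
          have e : p - (p - v) = v := by omega
          have h3 := Nat.dvd_sub h2 h1
          rwa [e] at h3
        have hdd : Nat.gcd (p - v) p ∣ Nat.gcd p v :=
          Nat.dvd_gcd (Nat.gcd_dvd_right _ _) hd
        rw [hpv] at hdd
        exact Nat.dvd_one.mp hdd
      · intro j hj
        rw [hmp] at hj
        have hsj : s j = if j < v then u + 1 else u := by
          rw [hs, Nat.mod_eq_of_lt hj]
        rw [hZ, hsj, hmp]
        by_cases hjv : j < v
        · simp only [if_pos hjv]
          have e1 : (u + 1) * p + j = q + (p + j - v) := by
            have : (u + 1) * p = u * p + p := by ring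
            omega
          have e2 : p + j - v < q := by omega
          have e3 : j + (p - v) < p := by omega
          rw [e1, Nat.add_mod_left, Nat.mod_eq_of_lt e2, Nat.mod_eq_of_lt e3]
          omega
        · simp only [if_neg hjv]
          have e1 : u * p + j = q + (j - v) := by omega
          have e2 : j - v < q := by omega
          have e3 : j + (p - v) = p + (j - v) := by omega
          rw [e1, Nat.add_mod_left, Nat.mod_eq_of_lt e2, e3, Nat.add_mod_left,
            Nat.mod_eq_of_lt (by omega)]
    · have hmq : M = q := min_eq_right h.le
      have hu : u = 0 := by
        rcases Nat.eq_zero_or_pos u with h0 | h0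
        · exact h0
        · exfalso
          have h1 : p ≤ u * p := Nat.le_mul_of_pos_left p h0
          have h2 : u * p ≤ q := Nat.le.intro hqd.symm
          exact absurd (le_trans h1 h2) (not_le.mpr h)
      have hvq : v = q := by
        have : u * p = 0 := by rw [hu]; ring
        omega
      refine ⟨p % q, ?_, ?_⟩
      · rw [hmq]
        have e : Nat.gcd (p % q) q = Nat.gcd q p := (Nat.gcd_rec q p).symm
        rw [Nat.Coprime, e]
        exact hpq.symm
      · intro j hj
        rw [hmq] at hj
        have hjp : j < p := lt_trans hj h
        have hsj : s j = 1 := by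
          rw [hs, Nat.mod_eq_of_lt hjp, if_pos (by omega)]
          omega
        rw [hZ, hsj, hmq, one_mul]
        conv_lhs => rw [Nat.add_mod, Nat.mod_eq_of_lt hj]
        rw [Nat.add_comm]
  haveI : NeZero M := ⟨hM0.ne'⟩
  have hmaps : Set.MapsTo Z ↑(Finset.range M) ↑(Finset.range M) := by
    intro j hj
    simp only [Finset.coe_range, Set.mem_Iio] at *
    rw [hZC j hj]
    exact Nat.mod_lt _ hM0
  have hinj : Set.InjOn Z ↑(Finset.range M) := by
    intro j hj j' hj' hjj
    simp only [Finset.coe_range, Set.mem_Iio] at hj hj'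
    rw [hZC j hj, hZC j' hj'] at hjj
    have : j ≡ j' [MOD M] := (Nat.ModEq.add_right_cancel' C hjj)
    rwa [Nat.ModEq, Nat.mod_eq_of_lt hj, Nat.mod_eq_of_lt hj'] at this
  have hbij : Set.BijOn Z ↑(Finset.range M) ↑(Finset.range M) :=
    ((Finset.range M).finite_toSet.injOn_iff_bijOn_of_mapsTo hmaps).mp hinj
  refine ⟨hbij, ?_⟩
  have hiter : ∀ k j, j < M → Z^[k] j = (j + k * C) % M := by
    intro k
    induction k with
    | zero => intro j hj; simp [Nat.mod_eq_of_lt hj]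
    | succ k ih =>
      intro j hj
      rw [Function.iterate_succ_apply', ih j hj,
        hZC _ (Nat.mod_lt _ hM0), Nat.mod_add_mod]
      ring_nf
  intro j hj j' hj'
  simp only [Finset.mem_range] at hj hj'
  have hCu : IsUnit (C : ZMod M) := (ZMod.isUnit_iff_coprime C M).mpr hC
  set a : ZMod M := ((j' : ZMod M) - (j : ZMod M)) * (C : ZMod M)⁻¹ with ha
  refine ⟨a.val, ?_⟩
  rw [hiter a.val j hj]
  have hcast : ((j + a.val * C : ℕ) : ZMod M) = (j' : ZMod M) := by
    push_cast
    rw [ZMod.natCast_val, ZMod.cast_id, ha, mul_assoc,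
      ZMod.inv_mul_of_unit _ hCu, mul_one]
    ring
  have := (ZMod.natCast_eq_natCast_iff _ _ _).mp hcast
  rwa [Nat.ModEq, Nat.mod_eq_of_lt hj'] at this
end

section
/- Let f: C → D and g: D → E be F[[U]]-linear chain maps between finitely generated chain complexes over F[[U]]. Write C_N = C ⊗_{F[[U]]} F[[U]]/(U^N) and similarly f_N, g_N. If for infinitely many N the sequence H(C_N) → H(D_N) → H(E_N) induced by f_N, g_N is exact at H(D_N), then H(C) → H(D) → H(E) is exact at H(D). -/
/-!
Krull's intersection theorem makes every submodule `S` of a finitely generated module over the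
Noetherian local ring `F⟦U⟧` closed in the `U`-adic topology: an element lying in `S + Uᴺ M` for
infinitely many `N` lies in `S`. Exactness at `H(D)` consists of two membership statements, each
of which holds modulo `Uᴺ` for infinitely many `N` by hypothesis. For `g y ∈ im dE` this is
immediate. For the converse, `x` must be a cycle with `y - f x` a boundary; both conditions are
encoded by `(y, 0)` lying in the image of `(x, z) ↦ (f x + dD z, dC x)`.
-/

/-- The ideal `(U^N) ⊆ F⟦U⟧` for `F = ℤ/2ℤ`. -/
noncomputable abbrev JspanN (N : ℕ) : Ideal (PowerSeries (ZMod 2)) :=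
  Ideal.span {PowerSeries.X ^ N}

open Filter IsLocalRing

namespace Submodule

variable {R M M' : Type*} [CommRing R] [AddCommGroup M] [Module R M] [AddCommGroup M'] [Module R M']

theorem prodMk_mem_smul_top {I : Ideal R} {u : M} {w : M'} (hu : u ∈ I • (⊤ : Submodule R M))
    (hw : w ∈ I • (⊤ : Submodule R M')) : (u, w) ∈ I • (⊤ : Submodule R (M × M')) := by
  have hu' : LinearMap.inl R M M' u ∈ I • ⊤ := mem_comap.mp (smul_top_le_comap_smul_top I _ hu)
  have hw' : LinearMap.inr R M M' w ∈ I • ⊤ := mem_comap.mp (smul_top_le_comap_smul_top I _ hw)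
  simpa using add_mem hu' hw'

theorem mem_of_frequently_mem_sup_pow_smul_top [IsNoetherianRing R] [Module.Finite R M]
    {I : Ideal R} (hI : I ≤ Ideal.jacobson ⊥) {S : Submodule R M} {v : M}
    (h : ∃ᶠ n in atTop, v ∈ S ⊔ I ^ n • ⊤) : v ∈ S := by
  rw [← Quotient.mk_eq_zero]
  refine (IsHausdorff.of_le_jacobson I (M ⧸ S) hI).haus _ fun n ↦ SModEq.zero.mpr ?_
  obtain ⟨N, hnN, hN⟩ := frequently_atTop.mp h n
  obtain ⟨s, hs, w, hw, rfl⟩ := mem_sup.mp hN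
  have hw' : w ∈ I ^ n • (⊤ : Submodule R M) :=
    smul_mono_left (Ideal.pow_le_pow_right hnN) hw
  simpa [(Quotient.mk_eq_zero S).mpr hs] using smul_top_le_comap_smul_top (I ^ n) S.mkQ hw'

end Submodule

theorem exists_cycle_lift_of_frequently_mod_pow {R P P' Q Q' : Type*} [CommRing R]
    [IsNoetherianRing R] [AddCommGroup P] [Module R P] [AddCommGroup P'] [Module R P']
    [AddCommGroup Q] [Module R Q] [AddCommGroup Q'] [Module R Q']
    [Module.Finite R P'] [Module.Finite R Q] {I : Ideal R} (hI : I ≤ Ideal.jacobson ⊥)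
    (d : P →ₗ[R] P') (f : P →ₗ[R] Q) (b : Q' →ₗ[R] Q) {y : Q}
    (h : ∃ᶠ N in atTop, ∃ x, d x ∈ I ^ N • (⊤ : Submodule R P') ∧
      y - f x ∈ LinearMap.range b ⊔ I ^ N • (⊤ : Submodule R Q)) :
    ∃ x, d x = 0 ∧ y - f x ∈ LinearMap.range b := by
  let φ := (f.coprod b).prod (d ∘ₗ LinearMap.fst R P Q')
  have hy : (y, 0) ∈ LinearMap.range φ := by
    refine Submodule.mem_of_frequently_mem_sup_pow_smul_top hI (h.mono ?_)
    rintro N ⟨x, hx, hyx⟩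
    obtain ⟨_, ⟨z, rfl⟩, u, hu, hyu⟩ := Submodule.mem_sup.mp hyx
    refine Submodule.mem_sup.mpr ⟨φ (x, z), ⟨(x, z), rfl⟩, (u, -d x),
      Submodule.prodMk_mem_smul_top hu (neg_mem hx), ?_⟩
    ext
    · simp [φ, add_assoc, hyu]
    · simp [φ]
  obtain ⟨⟨x, z⟩, hxz⟩ := hy
  obtain ⟨hfst, hsnd⟩ := Prod.ext_iff.mp hxz
  exact ⟨x, hsnd, z, eq_sub_of_add_eq' (by simpa [φ] using hfst)⟩

theorem JspanN_eq_maximalIdeal_pow (N : ℕ) :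
    JspanN N = maximalIdeal (PowerSeries (ZMod 2)) ^ N := by
  rw [PowerSeries.maximalIdeal_eq_span_X, Ideal.span_singleton_pow]

theorem stmt8_general
    (C D E : ℤ → Type*) [∀ n, AddCommGroup (C n)] [∀ n, AddCommGroup (D n)]
    [∀ n, AddCommGroup (E n)]
    [∀ n, Module (PowerSeries (ZMod 2)) (C n)] [∀ n, Module (PowerSeries (ZMod 2)) (D n)]
    [∀ n, Module (PowerSeries (ZMod 2)) (E n)]
    [∀ n, Module.Finite (PowerSeries (ZMod 2)) (C n)]
    [∀ n, Module.Finite (PowerSeries (ZMod 2)) (D n)]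
    [∀ n, Module.Finite (PowerSeries (ZMod 2)) (E n)]
    (dC : ∀ n : ℤ, C (n + 1) →ₗ[PowerSeries (ZMod 2)] C n)
    (dD : ∀ n : ℤ, D (n + 1) →ₗ[PowerSeries (ZMod 2)] D n)
    (dE : ∀ n : ℤ, E (n + 1) →ₗ[PowerSeries (ZMod 2)] E n)
    (f : ∀ n : ℤ, C n →ₗ[PowerSeries (ZMod 2)] D n)
    (g : ∀ n : ℤ, D n →ₗ[PowerSeries (ZMod 2)] E n)
    (hinf : {N : ℕ |
      ∀ (n : ℤ) (y : D (n + 1)),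
        dD n y ∈ (JspanN N • (⊤ : Submodule (PowerSeries (ZMod 2)) (D n))) →
        (g (n + 1) y ∈ LinearMap.range (dE (n + 1)) ⊔
            (JspanN N • (⊤ : Submodule (PowerSeries (ZMod 2)) (E (n + 1)))) ↔
          ∃ x : C (n + 1),
            dC n x ∈ (JspanN N • (⊤ : Submodule (PowerSeries (ZMod 2)) (C n))) ∧
            y - f (n + 1) x ∈ LinearMap.range (dD (n + 1)) ⊔
              (JspanN N • (⊤ : Submodule (PowerSeries (ZMod 2)) (D (n + 1)))))}.Infinite) :
    ∀ (n : ℤ) (y : D (n + 1)), dD n y = 0 →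
      (g (n + 1) y ∈ LinearMap.range (dE (n + 1)) ↔
        ∃ x : C (n + 1), dC n x = 0 ∧ y - f (n + 1) x ∈ LinearMap.range (dD (n + 1))) := by
  intro n y hy
  have hfreq := Nat.frequently_atTop_iff_infinite.mpr hinf
  constructor
  · intro hgy
    refine exists_cycle_lift_of_frequently_mod_pow (maximalIdeal_le_jacobson _) _ _ _
      (hfreq.mono fun N hN ↦ ?_)
    rw [← JspanN_eq_maximalIdeal_pow]
    exact (hN n y (hy ▸ zero_mem _)).mp (Submodule.mem_sup_left hgy)
  · rintro ⟨x, hx, hyx⟩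
    refine Submodule.mem_of_frequently_mem_sup_pow_smul_top (maximalIdeal_le_jacobson _)
      (hfreq.mono fun N hN ↦ ?_)
    rw [← JspanN_eq_maximalIdeal_pow]
    exact (hN n y (hy ▸ zero_mem _)).mpr ⟨x, hx ▸ zero_mem _, Submodule.mem_sup_left hyx⟩

/-- Approximation lemma: let `f : C → D`, `g : D → E` be `F⟦U⟧`-linear chain maps
between finitely generated chain complexes over `F⟦U⟧` (`F = ℤ/2ℤ`).  If for
infinitely many `N` the sequence `H(C_N) → H(D_N) → H(E_N)` induced by `f, g` on the
reductions mod `U^N` is exact at `H(D_N)` (expressed elementwise), then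
`H(C) → H(D) → H(E)` is exact at `H(D)`. -/
theorem stmt8
    (C D E : ℤ → Type*) [∀ n, AddCommGroup (C n)] [∀ n, AddCommGroup (D n)]
    [∀ n, AddCommGroup (E n)]
    [∀ n, Module (PowerSeries (ZMod 2)) (C n)] [∀ n, Module (PowerSeries (ZMod 2)) (D n)]
    [∀ n, Module (PowerSeries (ZMod 2)) (E n)]
    [∀ n, Module.Finite (PowerSeries (ZMod 2)) (C n)]
    [∀ n, Module.Finite (PowerSeries (ZMod 2)) (D n)]
    [∀ n, Module.Finite (PowerSeries (ZMod 2)) (E n)]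
    (dC : ∀ n : ℤ, C (n + 1) →ₗ[PowerSeries (ZMod 2)] C n)
    (dD : ∀ n : ℤ, D (n + 1) →ₗ[PowerSeries (ZMod 2)] D n)
    (dE : ∀ n : ℤ, E (n + 1) →ₗ[PowerSeries (ZMod 2)] E n)
    (hdC : ∀ n : ℤ, (dC n) ∘ₗ (dC (n + 1)) = 0)
    (hdD : ∀ n : ℤ, (dD n) ∘ₗ (dD (n + 1)) = 0)
    (hdE : ∀ n : ℤ, (dE n) ∘ₗ (dE (n + 1)) = 0)
    (f : ∀ n : ℤ, C n →ₗ[PowerSeries (ZMod 2)] D n)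
    (g : ∀ n : ℤ, D n →ₗ[PowerSeries (ZMod 2)] E n)
    (hf : ∀ n : ℤ, (f n) ∘ₗ (dC n) = (dD n) ∘ₗ (f (n + 1)))
    (hg : ∀ n : ℤ, (g n) ∘ₗ (dD n) = (dE n) ∘ₗ (g (n + 1)))
    (hinf : {N : ℕ |
      ∀ (n : ℤ) (y : D (n + 1)),
        dD n y ∈ (JspanN N • (⊤ : Submodule (PowerSeries (ZMod 2)) (D n))) →
        (g (n + 1) y ∈ LinearMap.range (dE (n + 1)) ⊔
            (JspanN N • (⊤ : Submodule (PowerSeries (ZMod 2)) (E (n + 1)))) ↔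
          ∃ x : C (n + 1),
            dC n x ∈ (JspanN N • (⊤ : Submodule (PowerSeries (ZMod 2)) (C n))) ∧
            y - f (n + 1) x ∈ LinearMap.range (dD (n + 1)) ⊔
              (JspanN N • (⊤ : Submodule (PowerSeries (ZMod 2)) (D (n + 1)))))}.Infinite) :
    ∀ (n : ℤ) (y : D (n + 1)), dD n y = 0 →
      (g (n + 1) y ∈ LinearMap.range (dE (n + 1)) ↔
        ∃ x : C (n + 1), dC n x = 0 ∧ y - f (n + 1) x ∈ LinearMap.range (dD (n + 1))) :=
  stmt8_general C D E dC dD dE f g hinf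
end

section
/- Let p, q be coprime positive integers and k ∈ {0,...,p-1} with gcd(p, k) = 1. Let E = F[[U]]^p with basis e_0,...,e_{p-1}, made into an F[[W,Z]]-module (where U = WZ) by letting W act by W·e_i = U·e_{i+q} if (i + q) mod p ∈ {0,...,k-1} and W·e_i = e_{i+q} otherwise (indices mod p), and Z act as U·W^{-1}. Then there exists an F[[W,Z]]-submodule R of F[[U^{1/p}]] (where W acts as U^{k/p} and Z as U^{1-k/p}) that is isomorphic to E as an F[[W,Z]]-module; concretely E is isomorphic to the free F[[U]]-submodule of F[[U^{1/p}]] spanned by U^{m'_0},...,U^{m'_{p-1}}, where m'_i = m_i - min_j m_j and the m_i are defined recursively as in the monodromy grading data. -/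
/-!
Write `T = U^{1/p}` and send `x ∈ E` to `∑ᵢ T^{mᵢ} · xᵢ(T^p)`. When the exponents `mᵢ` are
pairwise distinct modulo `p`, this is injective and its image is the set of series supported
on `⋃ᵢ (mᵢ + pℕ)`. It turns the action of `U` into multiplication by `T^p`, and the twisted
shifts `W`, `Z` into multiplication by `T^k`, `T^{p-k}` exactly when
`m_{i+q} + p·[(i+q) mod p < k] = mᵢ + k`.
The closed formula `mᵢ = ∑_{s<r} ((i - s q) mod p)` with `r q ≡ k` solves this recursion, and
`mᵢ ≡ r i + const (mod p)` with `r` a unit makes the residues distinct.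
-/

namespace PowerSeries

variable {R ι : Type*} [CommRing R] [Fintype ι] {p : ℕ} (hp : p ≠ 0)

theorem coeff_X_pow_mul_expand (d n : ℕ) (f : R⟦X⟧) :
    coeff n (X ^ d * expand p hp f) =
      if d ≤ n ∧ n % p = d % p then coeff ((n - d) / p) f else 0 := by
  rw [coeff_X_pow_mul', coeff_expand]
  by_cases hdn : d ≤ n
  · simp only [hdn, true_and, if_true, ← Nat.modEq_iff_dvd' hdn]
    exact if_congr eq_comm rfl rfl
  · simp [hdn]

noncomputable def interleave (d : ι → ℕ) : (ι → R⟦X⟧) →ₗ[R] R⟦X⟧ :=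
  ∑ i, LinearMap.mulLeft R (X ^ d i) ∘ₗ (expand p hp).toLinearMap ∘ₗ LinearMap.proj i

variable {hp} {d : ι → ℕ}

theorem interleave_apply (x : ι → R⟦X⟧) :
    interleave hp d x = ∑ i, X ^ d i * expand p hp (x i) := by
  simp [interleave]

theorem coeff_interleave_eq_zero {n : ℕ} (hn : ∀ i, d i ≤ n → n % p ≠ d i % p)
    (x : ι → R⟦X⟧) : coeff n (interleave hp d x) = 0 := by
  simp only [interleave_apply, map_sum, coeff_X_pow_mul_expand]
  exact Finset.sum_eq_zero fun i _ => if_neg fun h => hn i h.1 h.2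

theorem coeff_interleave (hd : Function.Injective (d · % p)) (x : ι → R⟦X⟧) (i : ι) (n : ℕ) :
    coeff (d i + p * n) (interleave hp d x) = coeff n (x i) := by
  have hmod : (d i + p * n) % p = d i % p := by simp
  rw [interleave_apply, map_sum, Finset.sum_eq_single i]
  · rw [coeff_X_pow_mul_expand, if_pos ⟨by omega, hmod⟩, Nat.add_sub_cancel_left,
      Nat.mul_div_cancel_left _ (Nat.pos_of_ne_zero hp)]
  · intro j _ hji
    rw [coeff_X_pow_mul_expand, if_neg fun h => hji (hd (h.2.symm.trans hmod))]
  · simp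

theorem interleave_injective (hd : Function.Injective (d · % p)) :
    Function.Injective (interleave hp d : (ι → R⟦X⟧) → R⟦X⟧) := by
  refine (injective_iff_map_eq_zero _).2 fun x hx => funext fun i => ext fun n => ?_
  rw [← coeff_interleave (hp := hp) hd, hx, map_zero, Pi.zero_apply, map_zero]

theorem range_interleave (hd : Function.Injective (d · % p)) :
    (LinearMap.range (interleave hp d : (ι → R⟦X⟧) →ₗ[R] R⟦X⟧) : Set R⟦X⟧) =
      {s | ∀ n, coeff n s ≠ 0 → ∃ i, d i ≤ n ∧ n % p = d i % p} := by
  ext s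
  constructor
  · rintro ⟨x, rfl⟩ n hn
    by_contra! h
    exact hn (coeff_interleave_eq_zero h x)
  · intro hs
    refine ⟨fun i => mk fun n => coeff (d i + p * n) s, ext fun n => ?_⟩
    by_cases h : ∃ i, d i ≤ n ∧ n % p = d i % p
    · obtain ⟨i, hle, hmod⟩ := h
      obtain ⟨n', rfl⟩ : ∃ n', n = d i + p * n' :=
        ⟨(n - d i) / p, by
          have := (Nat.modEq_iff_dvd' hle).1 hmod.symm
          rw [Nat.mul_div_cancel' this]; omega⟩
      rw [coeff_interleave hd, coeff_mk]
    · push Not at h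
      rw [coeff_interleave_eq_zero h]
      by_contra hne
      obtain ⟨i, hle, hmod⟩ := hs n (Ne.symm hne)
      exact h i hle hmod

theorem interleave_X_smul (x : ι → R⟦X⟧) :
    interleave hp d ((X : R⟦X⟧) • x) = X ^ p * interleave hp d x := by
  simp only [interleave_apply, Pi.smul_apply, smul_eq_mul, map_mul, expand_X, Finset.mul_sum]
  exact Finset.sum_congr rfl fun i _ => by ring

theorem interleave_twist {k : ℕ} (e : ι ≃ ι) (c : ι → R⟦X⟧)
    (hc : ∀ j, X ^ d j * expand p hp (c j) = X ^ (d (e j) + k)) (x : ι → R⟦X⟧) :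
    interleave hp d (fun j => c j * x (e j)) = X ^ k * interleave hp d x := by
  rw [interleave_apply, interleave_apply, ← e.sum_comp (fun i => X ^ d i * expand p hp (x i)),
    Finset.mul_sum]
  refine Finset.sum_congr rfl fun j _ => ?_
  rw [map_mul, ← mul_assoc, hc, pow_add]
  ring

end PowerSeries

theorem ZMod.val_add_ite_lt {p k : ℕ} [NeZero p] (hk : k < p) (a : ZMod p) :
    a.val + (if a.val < k then p else 0) = (a - (k : ZMod p)).val + k := by
  have hkval : (k : ZMod p).val = k := ZMod.val_cast_of_lt hk
  have hlt := (a - (k : ZMod p)).val_lt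
  rcases lt_or_ge ((a - (k : ZMod p)).val + k) p with h | h
  · have := ZMod.val_add_of_lt (a := a - (k : ZMod p)) (b := k) (by omega)
    rw [sub_add_cancel, hkval] at this
    split_ifs <;> omega
  · have := ZMod.val_add_of_le (a := a - (k : ZMod p)) (b := k) (by omega)
    rw [sub_add_cancel, hkval] at this
    split_ifs <;> omega

namespace Monodromy

variable {p : ℕ} [NeZero p] {q k : ℕ}

/- With `r q ≡ k (mod p)`, the sum telescopes along `i ↦ i + q` to the increment
`(i + q).val - (i + q - k).val = k - p·[(i + q).val < k]`; this is the paper's `m'` up to an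
additive constant. -/
noncomputable def exponent (p q k : ℕ) (i : ZMod p) : ℕ :=
  ∑ s ∈ Finset.range ((k : ZMod p) * (q : ZMod p)⁻¹).val, (i - s * q).val

theorem exponent_add (hpq : p.Coprime q) (hk : k < p) (i : ZMod p) :
    exponent p q k (i + q) + (if (i + q : ZMod p).val < k then p else 0) =
      exponent p q k i + k := by
  unfold exponent
  set r := ((k : ZMod p) * (q : ZMod p)⁻¹).val
  have hrq : (r : ZMod p) * q = k := by
    rw [ZMod.natCast_zmod_val, mul_assoc,
      ZMod.inv_mul_of_unit _ ((ZMod.isUnit_iff_coprime q p).2 hpq.symm), mul_one]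
  have htel := Finset.sum_range_succ' (fun s => (i + q - s * q : ZMod p).val) r
  rw [Finset.sum_range_succ] at htel
  have hshift : ∀ s : ℕ, (i + q - ((s + 1 : ℕ) : ZMod p) * q) = i - s * q := fun s => by
    push_cast; ring
  simp only [hshift, hrq, Nat.cast_zero, zero_mul, sub_zero] at htel
  have := ZMod.val_add_ite_lt hk (i + q)
  omega

theorem natCast_exponent (i : ZMod p) :
    (exponent p q k i : ZMod p) =
      (k * (q : ZMod p)⁻¹) * i -
        ∑ s ∈ Finset.range ((k : ZMod p) * (q : ZMod p)⁻¹).val, (s : ZMod p) * q := by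
  simp only [exponent, Nat.cast_sum, ZMod.natCast_val, ZMod.cast_id', id, Finset.sum_sub_distrib,
    Finset.sum_const, Finset.card_range, nsmul_eq_mul]

theorem exponent_mod_injective (hpq : p.Coprime q) (hpk : p.Coprime k) :
    Function.Injective (exponent p q k · % p) := by
  intro i j hij
  have hunit : IsUnit ((k : ZMod p) * (q : ZMod p)⁻¹) := by
    rw [← ZMod.coe_unitOfCoprime q hpq.symm, ZMod.inv_coe_unit]
    exact ((ZMod.isUnit_iff_coprime k p).2 hpk.symm).mul (Units.isUnit _)
  have hcast := (ZMod.natCast_eq_natCast_iff' _ _ _).2 hij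
  rw [natCast_exponent, natCast_exponent, sub_left_inj] at hcast
  exact hunit.mul_left_cancel hcast

open PowerSeries

variable {R : Type*} [CommRing R]

theorem X_pow_exponent_mul_expand_W (hpq : p.Coprime q) (hk : k < p) (j : ZMod p) :
    (X : R⟦X⟧) ^ exponent p q k j * expand p (NeZero.ne p) (if j.val < k then X else 1) =
      X ^ (exponent p q k (j - q) + k) := by
  have := exponent_add hpq hk (j - q)
  rw [sub_add_cancel] at this
  split_ifs at this ⊢ <;> simp only [expand_X, map_one, mul_one, ← pow_add] <;> congr 1

theorem X_pow_exponent_mul_expand_Z (hpq : p.Coprime q) (hk : k < p) (j : ZMod p) :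
    (X : R⟦X⟧) ^ exponent p q k j *
        expand p (NeZero.ne p) (if (j + q : ZMod p).val < k then 1 else X) =
      X ^ (exponent p q k (j + q) + (p - k)) := by
  have := exponent_add hpq hk j
  split_ifs at this ⊢ <;> simp only [expand_X, map_one, mul_one, ← pow_add] <;> congr 1 <;> omega

end Monodromy

open Monodromy PowerSeries

/- `F⟦U^{1/p}⟧` is modelled as `F⟦T⟧` with `T = U^{1/p}`, so `U`, `W`, `Z` act on it as `T^p`,
`T^k`, `T^{p-k}`; on `E`, `φ` and `ψ` are the actions of `W` and `Z`, and `U` acts as `X`. -/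
theorem stmt11_general (p q k : ℕ) (hp : 0 < p) (hpq : Nat.Coprime p q)
    (hk : k < p) (hpk : Nat.Coprime p k)
    (φ ψ : (ZMod p → PowerSeries (ZMod 2)) →ₗ[PowerSeries (ZMod 2)]
      (ZMod p → PowerSeries (ZMod 2)))
    (hφ : ∀ x j, φ x j = (if (j : ZMod p).val < k then PowerSeries.X else 1) * x (j - q))
    (hψ : ∀ x j, ψ x j =
      (if ((j + q : ZMod p)).val < k then 1 else PowerSeries.X) * x (j + q)) :
    ∃ Rsub : Submodule (ZMod 2) (PowerSeries (ZMod 2)),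
      (∀ s ∈ Rsub, PowerSeries.X ^ k * s ∈ Rsub) ∧
      (∀ s ∈ Rsub, PowerSeries.X ^ (p - k) * s ∈ Rsub) ∧
      ∃ f : (ZMod p → PowerSeries (ZMod 2)) ≃ₗ[ZMod 2] Rsub,
        (∀ x, ((f (φ x) : PowerSeries (ZMod 2)))
            = PowerSeries.X ^ k * ((f x : PowerSeries (ZMod 2)))) ∧
        (∀ x, ((f (ψ x) : PowerSeries (ZMod 2)))
            = PowerSeries.X ^ (p - k) * ((f x : PowerSeries (ZMod 2)))) ∧
        (∀ x, ((f ((PowerSeries.X : PowerSeries (ZMod 2)) • x) : PowerSeries (ZMod 2)))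
            = PowerSeries.X ^ p * ((f x : PowerSeries (ZMod 2)))) ∧
      ∃ m' : ZMod p → ℕ,
        (Rsub : Set (PowerSeries (ZMod 2))) =
          {s | ∀ n : ℕ, PowerSeries.coeff n s ≠ 0 →
            ∃ i : ZMod p, m' i ≤ n ∧ n % p = m' i % p} := by
  have : NeZero p := ⟨hp.ne'⟩
  have hinj := exponent_mod_injective hpq hpk
  let F := interleave (R := ZMod 2) (NeZero.ne p) (exponent p q k)
  have hW : ∀ x, F (φ x) = X ^ k * F x := fun x => by
    rw [show φ x = fun j => (if j.val < k then X else 1) * x (Equiv.subRight (q : ZMod p) j)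
      from funext (hφ x)]
    exact interleave_twist (Equiv.subRight (q : ZMod p)) (fun j => if j.val < k then X else 1)
      (X_pow_exponent_mul_expand_W hpq hk) x
  have hZ : ∀ x, F (ψ x) = X ^ (p - k) * F x := fun x => by
    rw [show ψ x = fun j => (if (j + q : ZMod p).val < k then 1 else X) *
      x (Equiv.addRight (q : ZMod p) j) from funext (hψ x)]
    exact interleave_twist (Equiv.addRight (q : ZMod p))
      (fun j => if (j + q : ZMod p).val < k then 1 else X)
      (X_pow_exponent_mul_expand_Z hpq hk) x
  refine ⟨LinearMap.range F, ?_, ?_, LinearEquiv.ofInjective F (interleave_injective hinj),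
    hW, hZ, interleave_X_smul, exponent p q k, range_interleave hinj⟩
  · rintro _ ⟨x, rfl⟩
    exact ⟨φ x, hW x⟩
  · rintro _ ⟨x, rfl⟩
    exact ⟨ψ x, hZ x⟩

/-- Interpretation of the local system `E_{p,q,k}` inside `F⟦U^{1/p}⟧` when
`gcd(p,k) = 1`.  Here `F = ℤ/2ℤ`, and `F⟦U^{1/p}⟧` is modeled as the power series
ring `F⟦T⟧` with `T = U^{1/p}`, so that `U = T^p`, `W` acts as `T^k` and `Z` as
`T^{p-k}`.  The module `E = E_{p,q,k} = ⊕_{i ∈ ℤ/pℤ} e_i F⟦U⟧` carries the `W`-action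
`φ(e_i) = U·e_{i+q}` if `(i+q) mod p ∈ {0,…,k-1}`, `e_{i+q}` otherwise, and the
`Z`-action `ψ = U·φ⁻¹`.  The claim: there is an `F⟦W,Z⟧`-submodule `R ⊆ F⟦T⟧`
(i.e. a subspace closed under multiplication by `T^k` and `T^{p-k}`) together with an
isomorphism `f : E ≃ R` intertwining `φ` with `T^k`, `ψ` with `T^{p-k}` (and hence
`U` with `T^p`); concretely, `R` is the free `F⟦U⟧`-submodule spanned by monomials
`T^{m'_i}`, `i ∈ ℤ/pℤ`. -/
theorem stmt11 (p q k : ℕ) (hp : 0 < p) (hq : 0 < q) (hpq : Nat.Coprime p q)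
    (hk : k < p) (hpk : Nat.Coprime p k)
    (φ ψ : (ZMod p → PowerSeries (ZMod 2)) →ₗ[PowerSeries (ZMod 2)]
      (ZMod p → PowerSeries (ZMod 2)))
    (hφ : ∀ x j, φ x j = (if (j : ZMod p).val < k then PowerSeries.X else 1) * x (j - q))
    (hψ : ∀ x j, ψ x j =
      (if ((j + q : ZMod p)).val < k then 1 else PowerSeries.X) * x (j + q)) :
    ∃ Rsub : Submodule (ZMod 2) (PowerSeries (ZMod 2)),
      (∀ s ∈ Rsub, PowerSeries.X ^ k * s ∈ Rsub) ∧
      (∀ s ∈ Rsub, PowerSeries.X ^ (p - k) * s ∈ Rsub) ∧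
      ∃ f : (ZMod p → PowerSeries (ZMod 2)) ≃ₗ[ZMod 2] Rsub,
        (∀ x, ((f (φ x) : PowerSeries (ZMod 2)))
            = PowerSeries.X ^ k * ((f x : PowerSeries (ZMod 2)))) ∧
        (∀ x, ((f (ψ x) : PowerSeries (ZMod 2)))
            = PowerSeries.X ^ (p - k) * ((f x : PowerSeries (ZMod 2)))) ∧
        (∀ x, ((f ((PowerSeries.X : PowerSeries (ZMod 2)) • x) : PowerSeries (ZMod 2)))
            = PowerSeries.X ^ p * ((f x : PowerSeries (ZMod 2)))) ∧
      ∃ m' : ZMod p → ℕ,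
        (Rsub : Set (PowerSeries (ZMod 2))) =
          {s | ∀ n : ℕ, PowerSeries.coeff n s ≠ 0 →
            ∃ i : ZMod p, m' i ≤ n ∧ n % p = m' i % p} :=
  stmt11_general p q k hp hpq hk hpk φ ψ hφ hψ
end

section
/- Let p, q be coprime positive integers and k ∈ {0,...,p-1}. Let E^k_∞ = F[[U]]^p with basis y_0,...,y_{p-1} and monodromy φ^k_∞(y_i) = u_{i}·y_{i+1} where u_{(-i q^{-1} - 1) mod p} = U for i = 0,...,k-1 and u_j = 1 otherwise (q^{-1} the inverse of q mod p). Let E_{p,q,k} = F[[U]]^p with basis e_0,...,e_{p-1} and shift map φ_{p,q,k}(e_i) = U·e_{i+q} if (i+q) mod p ∈ {0,...,k-1}, else e_{i+q}. Then the F[[U]]-linear map Φ: E^k_∞ → E_{p,q,k} given by Φ(y_i) = e_{(qi + k - 1) mod p} satisfies Φ ∘ φ^k_∞ = φ_{p,q,k} ∘ Φ; in particular the two F[[W,Z]]-modules (with W acting by the respective monodromy and Z by U times its inverse) are isomorphic. -/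
/-- The relabeling `Φ(y_i) = e_{(qi + k - 1) mod p}` intertwines the monodromy
`φ^k_∞ (y_i) = u_i y_{i+1}` (with `u_j = U` iff `(-(j+1)·q) mod p ∈ {0,…,k-1}`) with
the shift `φ_{p,q,k} (e_i) = U·e_{i+q}` if `(i+q) mod p ∈ {0,…,k-1}`, `e_{i+q}`
otherwise; moreover `Φ` is bijective, so the two `F⟦W,Z⟧`-modules (`W` acting as the
monodromy, `Z` as `U` times its inverse, `U = WZ`) are isomorphic.  Modules are
written in coordinates: `E = (ℤ/pℤ → F⟦U⟧)` with `F = ℤ/2ℤ`. -/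
theorem stmt12 (p q k : ℕ) (hp : 0 < p) (hq : 0 < q) (hpq : Nat.Coprime p q)
    (hk : k < p)
    (u : ZMod p → PowerSeries (ZMod 2))
    (hu : ∀ j : ZMod p,
      u j = if ((-(j + 1)) * (q : ZMod p)).val < k then PowerSeries.X else 1)
    (φinf φpqk Φ : (ZMod p → PowerSeries (ZMod 2)) →ₗ[PowerSeries (ZMod 2)]
      (ZMod p → PowerSeries (ZMod 2)))
    (hφinf : ∀ x j, φinf x j = u (j - 1) * x (j - 1))
    (hφpqk : ∀ x j, φpqk x j =
      (if (j : ZMod p).val < k then PowerSeries.X else 1) * x (j - q))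
    (hΦ : ∀ x j, Φ x j = x ((j - (k : ZMod p) + 1) * (q : ZMod p)⁻¹)) :
    Φ ∘ₗ φinf = φpqk ∘ₗ Φ ∧ Function.Bijective Φ := by
  haveI : NeZero p := ⟨hp.ne'⟩
  have hqinv : (q : ZMod p) * (q : ZMod p)⁻¹ = 1 := ZMod.coe_mul_inv_eq_one q hpq.symm
  have hA : ∀ j : ZMod p, (((k : ZMod p) - 1 - j).val < k ↔ j.val < k) := by
    intro j
    rcases Nat.eq_zero_or_pos k with rfl | hk1
    · simp
    · have hn : j.val < p := ZMod.val_lt j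
      have e : ((p + k - 1 - j.val : ℕ) : ZMod p) = (k : ZMod p) - 1 - j := by
        have h1 : (p + k - 1 - j.val) + j.val = p + (k - 1) := by omega
        have h2 := congrArg (Nat.cast : ℕ → ZMod p) h1
        push_cast [Nat.cast_sub hk1, ZMod.natCast_self, ZMod.natCast_val,
          ZMod.cast_id] at h2
        linear_combination h2
      rw [← e, ZMod.val_natCast]
      rcases lt_or_ge j.val k with h | h
      · have h3 : p + k - 1 - j.val = p + (k - 1 - j.val) := by omega
        rw [h3, Nat.add_mod_left, Nat.mod_eq_of_lt (by omega)]
        omega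
      · rw [Nat.mod_eq_of_lt (by omega)]
        omega
  constructor
  · apply LinearMap.ext; intro x; funext j
    simp only [LinearMap.comp_apply]
    rw [hΦ, hφinf, hφpqk, hΦ, hu]
    have harg : (-(((j - (k : ZMod p) + 1) * (q : ZMod p)⁻¹ - 1) + 1)) * (q : ZMod p)
        = (k : ZMod p) - 1 - j := by
      linear_combination (-(j - (k : ZMod p) + 1)) * hqinv
    have hidx : (j - (k : ZMod p) + 1) * (q : ZMod p)⁻¹ - 1
        = (j - (q : ZMod p) - (k : ZMod p) + 1) * (q : ZMod p)⁻¹ := by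
      linear_combination hqinv
    rw [harg, hidx]
    simp only [hA j]
  · refine Function.bijective_iff_has_inverse.mpr
      ⟨fun x j => x (j * q + (k : ZMod p) - 1), fun x => ?_, fun x => ?_⟩
    · funext j
      simp only [hΦ]
      have h5 : (j * (q : ZMod p) + (k : ZMod p) - 1 - (k : ZMod p) + 1)
          * (q : ZMod p)⁻¹ = j := by
        linear_combination j * hqinv
      rw [h5]
    · funext j
      simp only [hΦ]
      have h6 : (j - (k : ZMod p) + 1) * (q : ZMod p)⁻¹ * (q : ZMod p)
          + (k : ZMod p) - 1 = j := by
        linear_combination (j - (k : ZMod p) + 1) * hqinv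
      rw [h6]
end

section
/- Let p, q be coprime positive integers, both odd (so p + q is even), write q = 2q' + 1. Define s as usual (q = up + v, 0 ≤ v < p, s_i = u+1 for i < v else u), and consider the involution (i, ℓ) ↦ ((q - i - 1) mod p, (-ℓ) mod s_i) on the index set I = {(i, ℓ) : 0 ≤ i ≤ p-1, s_i ≠ 0, ℓ ∈ ℤ/s_iℤ}. Then this involution on I has exactly one fixed point, namely with first coordinate q' mod p. Consequently the ℤ/2ℤ-span of {f_{(i,ℓ)} + f_{ι(i,ℓ)} : (i,ℓ) ∈ I} in the free module ⊕_{(i,ℓ) ∈ I} f_{(i,ℓ)} F[[U]] has rank (q-1)/2. -/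
private lemma aux_mod_eq {p a b : ℕ} (hb : b < p) (h : (a : ZMod p) = (b : ZMod p)) : a % p = b := by
  haveI : NeZero p := ⟨by omega⟩
  have h2 := congrArg ZMod.val h
  rwa [ZMod.val_natCast, ZMod.val_natCast, Nat.mod_eq_of_lt hb] at h2

private lemma aux_sigma_val (p q u v : ℕ) (hp : 0 < p) (hq : 0 < q) (hv : v < p)
    (hqd : q = u * p + v) (i : ℕ) (hi : i < p) :
    (q - 1 + (p - i)) % p = if i < v then v - 1 - i else p + v - 1 - i := by
  by_cases h : i < v
  · rw [show q - 1 + (p - i) = p * (u + 1) + (v - 1 - i) by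
      have hpu : p * (u + 1) = u * p + p := by ring
      omega, Nat.mul_add_mod, if_pos h, Nat.mod_eq_of_lt (by omega)]
  · rw [show q - 1 + (p - i) = p * u + (p + v - 1 - i) by
      have hpu : p * u = u * p := by ring
      omega, Nat.mul_add_mod, if_neg h, Nat.mod_eq_of_lt (by omega)]

private lemma aux_sigma_invol (p q u v : ℕ) (hp : 0 < p) (hq : 0 < q) (hv : v < p)
    (hqd : q = u * p + v) (i : ℕ) (hi : i < p) :
    (q - 1 + (p - (q - 1 + (p - i)) % p)) % p = i := by
  rw [aux_sigma_val p q u v hp hq hv hqd i hi]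
  by_cases h : i < v
  · rw [if_pos h, aux_sigma_val p q u v hp hq hv hqd _ (by omega),
      if_pos (show v - 1 - i < v by omega)]
    omega
  · rw [if_neg h, aux_sigma_val p q u v hp hq hv hqd _ (by omega),
      if_neg (show ¬ (p + v - 1 - i < v) by omega)]
    omega

private lemma aux_fixA (p q q' : ℕ) (hp : 0 < p) (hq : 0 < q) (hpodd : Odd p)
    (hq' : q = 2 * q' + 1) (i : ℕ) (hi : i < p)
    (hfix : (q - 1 + (p - i)) % p = i) : i = q' % p := by
  haveI : NeZero p := ⟨hp.ne'⟩
  have h2 : ((q - 1 + (p - i) : ℕ) : ZMod p) = (i : ℕ) := by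
    rw [← ZMod.natCast_mod, hfix]
  rw [show q - 1 + (p - i) = 2 * q' + (p - i) by omega] at h2
  push_cast [Nat.cast_sub hi.le] at h2
  rw [ZMod.natCast_self] at h2
  have h3 : (2 : ZMod p) * q' = 2 * i := by linear_combination h2
  have hu2 : IsUnit (2 : ZMod p) := by
    have := (ZMod.isUnit_iff_coprime 2 p).mpr (Nat.coprime_two_left.mpr hpodd)
    simpa using this
  have h4 : (q' : ZMod p) = (i : ZMod p) := hu2.mul_left_cancel h3
  exact (aux_mod_eq hi h4).symm

private lemma aux_fix0 (p q q' : ℕ) (hp : 0 < p) (hq : 0 < q) (hq' : q = 2 * q' + 1) :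
    (q - 1 + (p - q' % p)) % p = q' % p := by
  haveI : NeZero p := ⟨hp.ne'⟩
  apply aux_mod_eq (Nat.mod_lt _ hp)
  rw [show q - 1 + (p - q' % p) = 2 * q' + (p - q' % p) by omega]
  push_cast [Nat.cast_sub (le_of_lt (Nat.mod_lt q' hp)), ZMod.natCast_mod, ZMod.natCast_self]
  ring

private lemma aux_s_invol (p q u v : ℕ) (hp : 0 < p) (hq : 0 < q) (hv : v < p)
    (hqd : q = u * p + v) (s : ℕ → ℕ) (hs : ∀ i, s i = if i < v then u + 1 else u)
    (i : ℕ) (hi : i < p) : s ((q - 1 + (p - i)) % p) = s i := by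
  by_cases h : i < v
  · rw [aux_sigma_val p q u v hp hq hv hqd i hi, if_pos h, hs, hs, if_pos h,
      if_pos (by omega)]
  · rw [aux_sigma_val p q u v hp hq hv hqd i hi, if_neg h, hs, hs, if_neg h,
      if_neg (by omega)]

private lemma aux_s_le (p q u v : ℕ) (hp : 0 < p) (hv : v < p)
    (hqd : q = u * p + v) (s : ℕ → ℕ) (hs : ∀ i, s i = if i < v then u + 1 else u)
    (i : ℕ) : s i ≤ q := by
  have h1 : u ≤ u * p := Nat.le_mul_of_pos_right u hp
  rw [hs]; split <;> omega

private lemma aux_s_sum (p q u v : ℕ) (hp : 0 < p) (hv : v < p)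
    (hqd : q = u * p + v) (s : ℕ → ℕ) (hs : ∀ i, s i = if i < v then u + 1 else u) :
    ∑ i ∈ Finset.range p, s i = q := by
  have h1 : ∀ i, s i = u + (if i < v then 1 else 0) := by
    intro i; rw [hs]; split <;> simp
  simp only [h1]
  rw [Finset.sum_add_distrib, Finset.sum_const, Finset.card_range, smul_eq_mul]
  have h2 : ∑ i ∈ Finset.range p, (if i < v then 1 else 0) = v := by
    rw [← Finset.card_filter,
      show (Finset.range p).filter (fun i => i < v) = Finset.range v by
        ext x; simp; omega,
      Finset.card_range]
  rw [h2]
  have : p * u = u * p := by ring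
  omega

private lemma aux_div_mod (q a b : ℕ) (hq : 0 < q) (hb : b < q) :
    (a * q + b) / q = a ∧ (a * q + b) % q = b := by
  constructor
  · rw [show a * q + b = b + q * a by ring, Nat.add_mul_div_left _ _ hq,
      Nat.div_eq_of_lt hb, Nat.zero_add]
  · rw [show a * q + b = b + q * a by ring, Nat.add_mul_mod_self_left,
      Nat.mod_eq_of_lt hb]

private lemma aux_s_odd (p q q' u v : ℕ) (hp : 0 < p) (hq : 0 < q) (hpodd : Odd p)
    (hq' : q = 2 * q' + 1) (hv : v < p) (hqd : q = u * p + v)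
    (s : ℕ → ℕ) (hs : ∀ i, s i = if i < v then u + 1 else u) :
    s (q' % p) % 2 = 1 := by
  set i0 := q' % p with hi0def
  have hi0 : i0 < p := Nat.mod_lt _ hp
  have hsum : ∑ i ∈ Finset.range p, s i = q := aux_s_sum p q u v hp hv hqd s hs
  have hcast : ∑ i ∈ Finset.range p, ((s i : ZMod 2)) = (q : ZMod 2) := by
    rw [← Nat.cast_sum, hsum]
  have herase : ∑ i ∈ (Finset.range p).erase i0, ((s i : ZMod 2)) = 0 := by
    apply Finset.sum_involution (fun a _ => (q - 1 + (p - a)) % p)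
    · intro a ha
      have hap : a < p := Finset.mem_range.mp (Finset.mem_of_mem_erase ha)
      rw [aux_s_invol p q u v hp hq hv hqd s hs a hap]
      exact CharTwo.add_self_eq_zero _
    · intro a ha _
      have hane := Finset.ne_of_mem_erase ha
      have hap : a < p := Finset.mem_range.mp (Finset.mem_of_mem_erase ha)
      intro hcontra
      exact hane (aux_fixA p q q' hp hq hpodd hq' a hap hcontra)
    · intro a ha
      have hane := Finset.ne_of_mem_erase ha
      have hap : a < p := Finset.mem_range.mp (Finset.mem_of_mem_erase ha)
      refine Finset.mem_erase.mpr ⟨?_, Finset.mem_range.mpr (Nat.mod_lt _ hp)⟩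
      intro hcontra
      apply hane
      have := aux_sigma_invol p q u v hp hq hv hqd a hap
      rw [hcontra] at this
      rw [← this, aux_fix0 p q q' hp hq hq']
    · intro a ha
      exact aux_sigma_invol p q u v hp hq hv hqd a
        (Finset.mem_range.mp (Finset.mem_of_mem_erase ha))
  have hsplit := Finset.add_sum_erase _ (fun i => ((s i : ZMod 2)))
    (Finset.mem_range.mpr hi0)
  rw [herase, add_zero] at hsplit
  have hq2 : ((q : ℕ) : ZMod 2) = 1 := by
    rw [hq']; push_cast
    rw [show ((2 : ZMod 2)) = 0 by decide]
    ring
  have h1 : ((s i0 : ZMod 2)) = 1 := by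
    rw [hsplit, hcast, hq2]
  have h2 := congrArg ZMod.val h1
  rwa [ZMod.val_natCast] at h2

/-- For coprime odd positive integers `p, q` with `q = 2q' + 1`, the involution
`ι(i, ℓ) = ((q - i - 1) mod p, (-ℓ) mod s_i)` on the index set
`I = {(i, ℓ) : 0 ≤ i ≤ p - 1, ℓ ∈ ℤ/s_iℤ}` has exactly one fixed point, whose first
coordinate is `q' mod p`; consequently the span of `{f_x + f_{ι(x)} : x ∈ I}` in the
free module `⊕_{x ∈ I} f_x F⟦U⟧` (with `F = ℤ/2ℤ`) has rank `(q - 1)/2`. -/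
theorem stmt14 (p q q' u v : ℕ) (hp : 0 < p) (hq : 0 < q) (hpq : Nat.Coprime p q)
    (hpodd : Odd p) (hqodd : Odd q) (hq' : q = 2 * q' + 1)
    (hv : v < p) (hqd : q = u * p + v)
    (s : ℕ → ℕ) (hs : ∀ i, s i = if i < v then u + 1 else u)
    (I : Finset (ℕ × ℕ))
    (hI : I = (Finset.range p ×ˢ Finset.range q).filter (fun x => x.2 < s x.1))
    (ι : ℕ × ℕ → ℕ × ℕ)
    (hι : ∀ x : ℕ × ℕ, ι x = ((q - 1 + (p - x.1)) % p, (s x.1 - x.2) % s x.1)) :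
    (∀ x ∈ I, ι x ∈ I) ∧
    (I.filter (fun x => ι x = x)).card = 1 ∧
    (∀ x ∈ I, ι x = x → x.1 = q' % p) ∧
    Module.rank (PowerSeries (ZMod 2))
      (Submodule.span (PowerSeries (ZMod 2))
        {w : (ℕ × ℕ) → PowerSeries (ZMod 2) | ∃ x ∈ I,
          w = Pi.single x 1 + Pi.single (ι x) 1}) = (((q - 1) / 2 : ℕ) : Cardinal) := by
  have hmem : ∀ x : ℕ × ℕ, x ∈ I ↔ x.1 < p ∧ x.2 < q ∧ x.2 < s x.1 := by
    intro x
    rw [hI, Finset.mem_filter, Finset.mem_product, Finset.mem_range, Finset.mem_range]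
    tauto
  -- conjunct 1
  have hII : ∀ x ∈ I, ι x ∈ I := by
    intro x hx
    rw [hmem] at hx ⊢
    obtain ⟨h1, h2, h3⟩ := hx
    rw [hι]
    refine ⟨Nat.mod_lt _ hp, ?_, ?_⟩
    · exact lt_of_lt_of_le (Nat.mod_lt _ (by omega)) (aux_s_le p q u v hp hv hqd s hs x.1)
    · show (s x.1 - x.2) % s x.1 < s ((q - 1 + (p - x.1)) % p)
      rw [aux_s_invol p q u v hp hq hv hqd s hs x.1 h1]
      exact Nat.mod_lt _ (by omega)
  -- involution on I
  have hinv : ∀ x ∈ I, ι (ι x) = x := by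
    rintro ⟨i, l⟩ hx
    rw [hmem] at hx
    obtain ⟨h1, h2, h3⟩ := hx
    have h3' : l < s i := h3
    rw [hι, hι]
    dsimp only
    rw [Prod.mk.injEq]
    constructor
    · exact aux_sigma_invol p q u v hp hq hv hqd i h1
    · rw [aux_s_invol p q u v hp hq hv hqd s hs i h1]
      rcases Nat.eq_zero_or_pos l with h0 | h0
      · rw [h0]; simp [Nat.mod_self]
      · rw [Nat.mod_eq_of_lt (show s i - l < s i by omega),
          Nat.mod_eq_of_lt (show s i - (s i - l) < s i by omega)]
        omega
  -- conjunct 3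
  have hfix1 : ∀ x ∈ I, ι x = x → x.1 = q' % p := by
    rintro ⟨i, l⟩ hx hfix
    rw [hmem] at hx
    rw [hι] at hfix
    have hfst := congrArg Prod.fst hfix
    dsimp only at hfst
    exact aux_fixA p q q' hp hq hpodd hq' i hx.1 hfst
  have hodd : s (q' % p) % 2 = 1 := aux_s_odd p q q' u v hp hq hpodd hq' hv hqd s hs
  have hi0 : q' % p < p := Nat.mod_lt _ hp
  -- conjunct 2
  have hx0I : (q' % p, 0) ∈ I := by
    rw [hmem]
    exact ⟨hi0, hq, show 0 < s (q' % p) by omega⟩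
  have hιx0 : ι (q' % p, 0) = (q' % p, 0) := by
    rw [hι]
    dsimp only
    rw [Prod.mk.injEq]
    exact ⟨aux_fix0 p q q' hp hq hq', by simp [Nat.mod_self]⟩
  have hfilter : I.filter (fun x => ι x = x) = {(q' % p, 0)} := by
    apply Finset.eq_singleton_iff_unique_mem.mpr
    refine ⟨Finset.mem_filter.mpr ⟨hx0I, hιx0⟩, ?_⟩
    rintro ⟨i, l⟩ hmemf
    obtain ⟨hxI, hfixx⟩ := Finset.mem_filter.mp hmemf
    have hi : i = q' % p := hfix1 _ hxI hfixx
    subst hi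
    obtain ⟨_, _, h3⟩ := (hmem _).mp hxI
    have h3' : l < s (q' % p) := h3
    have h2 := congrArg Prod.snd hfixx
    rw [hι] at h2
    dsimp only at h2
    rw [Prod.mk.injEq]
    refine ⟨rfl, ?_⟩
    rcases Nat.eq_zero_or_pos l with h0 | h0
    · exact h0
    · exfalso
      rw [Nat.mod_eq_of_lt (by omega)] at h2
      omega
  have hcard1 : (I.filter (fun x => ι x = x)).card = 1 := by
    rw [hfilter]; rfl
  refine ⟨hII, hcard1, hfix1, ?_⟩
  classical
  -- cardinality of I
  have hIcard : I.card = q := by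
    rw [hI, Finset.card_filter, Finset.sum_product]
    have hinner : ∀ i ∈ Finset.range p,
        (∑ j ∈ Finset.range q, if (i, j).2 < s (i, j).1 then 1 else 0) = s i := by
      intro i _
      rw [show (∑ j ∈ Finset.range q, if (i, j).2 < s (i, j).1 then 1 else 0)
          = ∑ j ∈ Finset.range q, if j < s i then 1 else 0 from rfl,
        ← Finset.card_filter,
        show (Finset.range q).filter (fun j => j < s i) = Finset.range (s i) by
          ext x; simp; have := aux_s_le p q u v hp hv hqd s hs i; omega,
        Finset.card_range]
    rw [Finset.sum_congr rfl hinner, aux_s_sum p q u v hp hv hqd s hs]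
  have heinj : ∀ x ∈ I, ∀ y ∈ I, x.1 * q + x.2 = y.1 * q + y.2 → x = y := by
    intro x hx y hy h
    obtain ⟨_, hx2, _⟩ := (hmem x).mp hx
    obtain ⟨_, hy2, _⟩ := (hmem y).mp hy
    obtain ⟨hdx, hmx⟩ := aux_div_mod q x.1 x.2 hq hx2
    obtain ⟨hdy, hmy⟩ := aux_div_mod q y.1 y.2 hq hy2
    have e1 : x.1 = y.1 := by rw [← hdx, ← hdy, h]
    have e2 : x.2 = y.2 := by rw [← hmx, ← hmy, h]
    exact Prod.ext e1 e2
  set T := I.filter (fun x => x.1 * q + x.2 < (ι x).1 * q + (ι x).2) with hT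
  have hTdisj : ∀ x ∈ T, ∀ y ∈ T, ι x ≠ y := by
    intro x hx y hy hxy
    obtain ⟨hxI, hxe⟩ := Finset.mem_filter.mp hx
    obtain ⟨hyI, hye⟩ := Finset.mem_filter.mp hy
    have h1 : ι y = x := by rw [← hxy, hinv x hxI]
    rw [hxy] at hxe
    rw [h1] at hye
    omega
  have hTne : ∀ x ∈ T, ι x ≠ x := by
    intro x hx hc
    have h := (Finset.mem_filter.mp hx).2
    rw [hc] at h
    omega
  set f : {x // x ∈ T} → ((ℕ × ℕ) → PowerSeries (ZMod 2)) :=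
    fun x => Pi.single x.1 1 + Pi.single (ι x.1) 1 with hf
  have h11 : (1 + 1 : PowerSeries (ZMod 2)) = 0 := by
    ext n
    rw [map_add, map_zero]
    exact CharTwo.add_self_eq_zero _
  have hspan : Submodule.span (PowerSeries (ZMod 2))
      {w : (ℕ × ℕ) → PowerSeries (ZMod 2) | ∃ x ∈ I,
        w = Pi.single x 1 + Pi.single (ι x) 1}
      = Submodule.span (PowerSeries (ZMod 2)) (Set.range f) := by
    apply le_antisymm
    · rw [Submodule.span_le]
      rintro w ⟨x, hxI, rfl⟩
      by_cases hfx : ι x = x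
      · rw [hfx, ← Pi.single_add, h11, Pi.single_zero]
        exact Submodule.zero_mem _
      · by_cases hlt : x.1 * q + x.2 < (ι x).1 * q + (ι x).2
        · exact Submodule.subset_span ⟨⟨x, Finset.mem_filter.mpr ⟨hxI, hlt⟩⟩, rfl⟩
        · have hne : (ι x).1 * q + (ι x).2 ≠ x.1 * q + x.2 := fun hc =>
            hfx (heinj _ (hII x hxI) _ hxI hc)
          have hgt : (ι x).1 * q + (ι x).2 < x.1 * q + x.2 := by omega
          have hiT : ι x ∈ T := Finset.mem_filter.mpr
            ⟨hII x hxI, by rw [hinv x hxI]; exact hgt⟩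
          refine Submodule.subset_span ⟨⟨ι x, hiT⟩, ?_⟩
          show Pi.single (ι x) 1 + Pi.single (ι (ι x)) 1 = _
          rw [hinv x hxI, add_comm]
    · rw [Submodule.span_le]
      rintro w ⟨⟨x, hxT⟩, rfl⟩
      exact Submodule.subset_span ⟨x, (Finset.mem_filter.mp hxT).1, rfl⟩
  have hfinj : Function.Injective f := by
    intro i j h
    by_contra hne
    have hci := congrFun h i.1
    rw [hf] at hci
    simp only [Pi.add_apply, Pi.single_apply] at hci
    rw [if_neg (show (i.1 : ℕ × ℕ) ≠ ι i.1 from fun hc => hTne i.1 i.2 hc.symm),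
      if_neg (show (i.1 : ℕ × ℕ) ≠ j.1 from fun hc => hne (Subtype.ext hc)),
      if_neg (show (i.1 : ℕ × ℕ) ≠ ι j.1 from fun hc => hTdisj j.1 j.2 i.1 i.2 hc.symm)] at hci
    simp at hci
  have hlinind : LinearIndependent (PowerSeries (ZMod 2)) f := by
    rw [Fintype.linearIndependent_iff]
    intro c hc i
    have hci := congrFun hc i.1
    rw [Finset.sum_apply, Pi.zero_apply] at hci
    rw [Finset.sum_eq_single i] at hci
    · have hfi : f i i.1 =
          (Pi.single (i.1 : ℕ × ℕ) 1 : (ℕ × ℕ) → PowerSeries (ZMod 2)) i.1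
          + (Pi.single (ι i.1) 1 : (ℕ × ℕ) → PowerSeries (ZMod 2)) i.1 := rfl
      have hfi1 : f i i.1 = 1 := by
        rw [hfi, Pi.single_apply, Pi.single_apply, if_pos rfl,
          if_neg (show (i.1 : ℕ × ℕ) ≠ ι i.1 from fun hc => hTne i.1 i.2 hc.symm)]
        rw [add_zero]
      rwa [Pi.smul_apply, hfi1, smul_eq_mul, mul_one] at hci
    · intro j _ hji
      have hfj : f j i.1 =
          (Pi.single (j.1 : ℕ × ℕ) 1 : (ℕ × ℕ) → PowerSeries (ZMod 2)) i.1
          + (Pi.single (ι j.1) 1 : (ℕ × ℕ) → PowerSeries (ZMod 2)) i.1 := rfl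
      have hfj0 : f j i.1 = 0 := by
        rw [hfj, Pi.single_apply, Pi.single_apply,
          if_neg (show (i.1 : ℕ × ℕ) ≠ j.1 from fun hc => hji (Subtype.ext hc.symm)),
          if_neg (show (i.1 : ℕ × ℕ) ≠ ι j.1 from fun hc => hTdisj j.1 j.2 i.1 i.2 hc.symm)]
        rw [add_zero]
      rw [Pi.smul_apply, hfj0, smul_zero]
    · intro hni
      exact absurd (Finset.mem_univ i) hni
  rw [hspan, rank_span hlinind, Cardinal.mk_range_eq f hfinj,
    Cardinal.mk_coe_finset]
  norm_cast
  -- T.card = (q - 1) / 2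
  set T' := I.filter (fun x => (ι x).1 * q + (ι x).2 < x.1 * q + x.2) with hT'
  have hN : (I.filter (fun x => ¬ ι x = x)).card = q - 1 := by
    have h := Finset.card_filter_add_card_filter_not
      (s := I) (p := fun x => ι x = x)
    omega
  have hunion : I.filter (fun x => ¬ ι x = x) = T ∪ T' := by
    ext x
    rw [Finset.mem_union, hT, hT', Finset.mem_filter, Finset.mem_filter,
      Finset.mem_filter]
    constructor
    · rintro ⟨hxI, hfx⟩
      have hne : (ι x).1 * q + (ι x).2 ≠ x.1 * q + x.2 := fun hc =>
        hfx (heinj _ (hII x hxI) _ hxI hc)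
      rcases lt_or_gt_of_ne hne with h | h
      · exact Or.inr ⟨hxI, h⟩
      · exact Or.inl ⟨hxI, h⟩
    · rintro (⟨hxI, h⟩ | ⟨hxI, h⟩) <;>
        exact ⟨hxI, fun hc => by rw [hc] at h; omega⟩
  have hdisjTT : Disjoint T T' := by
    rw [Finset.disjoint_left]
    intro x hx hx'
    have h1 := (Finset.mem_filter.mp hx).2
    have h2 := (Finset.mem_filter.mp hx').2
    omega
  have hcardsum : T.card + T'.card = q - 1 := by
    rw [← Finset.card_union_of_disjoint hdisjTT, ← hunion]
    exact hN
  have hbij : T.card = T'.card := by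
    apply Finset.card_bij (fun x _ => ι x)
    · intro a ha
      obtain ⟨haI, hae⟩ := Finset.mem_filter.mp ha
      refine Finset.mem_filter.mpr ⟨hII a haI, ?_⟩
      rw [hinv a haI]
      exact hae
    · intro a ha b hb hab
      have := congrArg ι hab
      rwa [hinv a (Finset.mem_filter.mp ha).1, hinv b (Finset.mem_filter.mp hb).1] at this
    · intro b hb
      obtain ⟨hbI, hbe⟩ := Finset.mem_filter.mp hb
      refine ⟨ι b, Finset.mem_filter.mpr ⟨hII b hbI, ?_⟩, hinv b hbI⟩
      rw [hinv b hbI]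
      exact hbe
  omega
end
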